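/- arXiv:1606.08116 — 2 statements merged into one kernel-verified Lean document; each statement's English description precedes it below -/
import Mathlib

section
/- For all LTL formulas φ₁, φ₂ and every infinite word ρ: if ρ ⊨ G(φ₁ U φ₂) then ρ ⊨ G(φ₁ ∨ φ₂) ∧ Fφ₂. Conversely, for every nonempty finite word σ, if the cyclic word σ^ω satisfies G(φ₁ ∨ φ₂) ∧ Fφ₂ then σ^ω ⊨ G(φ₁ U φ₂). -/
/-- Syntax of LTL formulas (with general negation, next, until, weak until). -/
inductive LTL (AP : Type) : Type where
  | tru : LTL AP
  | atom : AP → LTL AP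
  | neg : LTL AP → LTL AP
  | conj : LTL AP → LTL AP → LTL AP
  | disj : LTL AP → LTL AP → LTL AP
  | next : LTL AP → LTL AP
  | untl : LTL AP → LTL AP → LTL AP
  | wuntl : LTL AP → LTL AP → LTL AP

/-- Infinite words over the alphabet `2^AP`. -/
def Word (AP : Type) := ℕ → Set AP

/-- The suffix `ρ[i..]` of an infinite word. -/
def Word.suffix {AP : Type} (ρ : Word AP) (i : ℕ) : Word AP := fun n => ρ (n + i)

/-- Satisfaction of an LTL formula on an infinite word. -/
def sat {AP : Type} : Word AP → LTL AP → Prop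
  | _, .tru => True
  | ρ, .atom a => a ∈ ρ 0
  | ρ, .neg φ => ¬ sat ρ φ
  | ρ, .conj φ ψ => sat ρ φ ∧ sat ρ ψ
  | ρ, .disj φ ψ => sat ρ φ ∨ sat ρ ψ
  | ρ, .next φ => sat (ρ.suffix 1) φ
  | ρ, .untl φ ψ => ∃ i, sat (ρ.suffix i) ψ ∧ ∀ j < i, sat (ρ.suffix j) φ
  | ρ, .wuntl φ ψ =>
      (∀ i, sat (ρ.suffix i) φ) ∨ ∃ i, sat (ρ.suffix i) ψ ∧ ∀ j < i, sat (ρ.suffix j) φ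

/-- Eventually: `F φ = ⊤ U φ`. -/
def LTL.ev {AP : Type} (φ : LTL AP) : LTL AP := LTL.untl LTL.tru φ

/-- Always: `G φ = φ W ⊥`. -/
def LTL.alw {AP : Type} (φ : LTL AP) : LTL AP := LTL.wuntl φ (LTL.neg LTL.tru)

/-- Semantic equivalence of formulas on all infinite words. -/
def LTLequiv {AP : Type} (φ ψ : LTL AP) : Prop := ∀ ρ : Word AP, sat ρ φ ↔ sat ρ ψ

/-- Prepend a finite word `l` to an infinite word `ρ`. -/
def prepend {AP : Type} (l : List (Set AP)) (ρ : Word AP) : Word AP :=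
  fun i => if h : i < l.length then l.get ⟨i, h⟩ else ρ (i - l.length)

/-- A fairness formula: satisfaction is closed under suffixes and under prepending
arbitrary finite prefixes. -/
def Fairness {AP : Type} (φ : LTL AP) : Prop :=
  (∀ ρ : Word AP, sat ρ φ → ∀ i, sat (ρ.suffix i) φ) ∧
  (∀ ρ : Word AP, sat ρ φ → ∀ ρ₁ : List (Set AP), sat (prepend ρ₁ ρ) φ)

/-- The cyclic (periodic) word `σ^ω` obtained by repeating a nonempty finite word `σ`. -/
def cyc {AP : Type} (σ : List (Set AP)) (h : σ ≠ []) : Word AP :=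
  fun i => σ.get ⟨i % σ.length, Nat.mod_lt i (List.length_pos_iff.mpr h)⟩

/-- Propositional formulas: atoms and negated atoms combined with `∧`, `∨`. -/
inductive PropForm (AP : Type) : Type where
  | atom : AP → PropForm AP
  | natom : AP → PropForm AP
  | conj : PropForm AP → PropForm AP → PropForm AP
  | disj : PropForm AP → PropForm AP → PropForm AP

/-- Satisfaction of a propositional formula at a single letter `A ∈ 2^AP`. -/
def psat {AP : Type} (A : Set AP) : PropForm AP → Prop
  | .atom a => a ∈ A
  | .natom a => a ∉ A
  | .conj l₁ l₂ => psat A l₁ ∧ psat A l₂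
  | .disj l₁ l₂ => psat A l₁ ∨ psat A l₂

/-- Embedding of propositional formulas into LTL. -/
def PropForm.toLTL {AP : Type} : PropForm AP → LTL AP
  | .atom a => .atom a
  | .natom a => .neg (.atom a)
  | .conj l₁ l₂ => .conj l₁.toLTL l₂.toLTL
  | .disj l₁ l₂ => .disj l₁.toLTL l₂.toLTL

/-- A finite Kripke structure with a total transition relation. -/
structure Kripke (AP : Type) where
  S : Type
  [fin : Fintype S]
  init : S
  T : S → S → Prop
  total : ∀ s, ∃ t, T s t
  L : S → Set AP

/-- `π` is an infinite path of `K` starting at the initial state. -/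
def Kripke.IsPath {AP : Type} (K : Kripke AP) (π : ℕ → K.S) : Prop :=
  π 0 = K.init ∧ ∀ i, K.T (π i) (π (i + 1))

/-- There is a nonempty finite path from `s` to `t` staying inside `B`. -/
def Kripke.ConnIn {AP : Type} (K : Kripke AP) (B : Set K.S) (s t : K.S) : Prop :=
  ∃ n > 0, ∃ f : ℕ → K.S, f 0 = s ∧ f n = t ∧
    (∀ i < n, K.T (f i) (f (i + 1))) ∧ (∀ i ≤ n, f i ∈ B)

/-- `B` is a nontrivial strongly connected set of states. -/
def Kripke.IsSCSet {AP : Type} (K : Kripke AP) (B : Set K.S) : Prop :=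
  ∀ s ∈ B, ∀ t ∈ B, K.ConnIn B s t

/-- Some state of `B` is reachable from the initial state. -/
def Kripke.Reachable {AP : Type} (K : Kripke AP) (B : Set K.S) : Prop :=
  ∃ s ∈ B, ∃ n, ∃ f : ℕ → K.S, f 0 = K.init ∧ f n = s ∧ ∀ i < n, K.T (f i) (f (i + 1))

/-- The periodic word `({a}{}{a,c})^ω`. -/
def word1 {AP : Type} (a c : AP) : Word AP :=
  fun i => if i % 3 = 0 then {a} else if i % 3 = 1 then ∅ else {a, c}

/-- The periodic word `({a}{a,c}{})^ω`. -/
def word2 {AP : Type} (a c : AP) : Word AP :=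
  fun i => if i % 3 = 0 then {a} else if i % 3 = 1 then {a, c} else ∅

/-! On any word, `G (φ₁ U φ₂)` gives `φ₁ ∨ φ₂` at every position (`φ₂` if the until is
discharged at once, `φ₁` otherwise) and `φ₂` somewhere. Conversely, `G (φ₁ ∨ φ₂)` turns any
later occurrence of `φ₂` into a witness of `φ₁ U φ₂`: the first such occurrence has only
`φ₁`-positions before it. On a cyclic word an occurrence of `φ₂` recurs every period, so one
lies beyond every position. -/

namespace Word

variable {AP : Type}

@[simp]
theorem suffix_suffix (ρ : Word AP) (i j : ℕ) : (ρ.suffix i).suffix j = ρ.suffix (j + i) := by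
  funext n
  simp only [suffix, Nat.add_assoc]

end Word

section Semantics

variable {AP : Type} {ρ : Word AP} {φ φ₁ φ₂ : LTL AP}

theorem sat_alw : sat ρ φ.alw ↔ ∀ i, sat (ρ.suffix i) φ := by
  simp [LTL.alw, sat]

theorem sat_ev : sat ρ φ.ev ↔ ∃ i, sat (ρ.suffix i) φ := by
  simp [LTL.ev, sat]

theorem sat_alw_suffix (hφ : sat ρ φ.alw) (i : ℕ) : sat (ρ.suffix i) φ.alw :=
  sat_alw.2 fun j => by simpa using sat_alw.1 hφ (j + i)

theorem sat_disj_of_untl (h : sat ρ (φ₁.untl φ₂)) : sat ρ (φ₁.disj φ₂) := by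
  obtain ⟨k, hk₂, hk₁⟩ := h
  rcases Nat.eq_zero_or_pos k with rfl | hk
  · exact Or.inr hk₂
  · exact Or.inl (hk₁ 0 hk)

theorem sat_ev_of_untl (h : sat ρ (φ₁.untl φ₂)) : sat ρ φ₂.ev :=
  let ⟨k, hk, _⟩ := h
  sat_ev.2 ⟨k, hk⟩

theorem sat_untl_of_alw_disj (hG : sat ρ (φ₁.disj φ₂).alw) (hF : sat ρ φ₂.ev) :
    sat ρ (φ₁.untl φ₂) := by
  classical
  have hF' := sat_ev.1 hF
  refine ⟨Nat.find hF', Nat.find_spec hF', fun j hj => ?_⟩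
  exact (sat_alw.1 hG j).resolve_right (Nat.find_min hF' hj)

end Semantics

section Cyclic

variable {AP : Type} (σ : List (Set AP)) (h : σ ≠ [])

theorem cyc_periodic : Function.Periodic (cyc σ h) σ.length := by
  intro n
  simp [cyc]

theorem cyc_suffix_add_length_mul (k m : ℕ) :
    (cyc σ h).suffix (k + σ.length * m) = (cyc σ h).suffix k := by
  funext n
  rw [Word.suffix, Word.suffix, ← Nat.add_assoc, Nat.mul_comm]
  exact (cyc_periodic σ h).nat_mul m (n + k)

variable {σ h} {φ : LTL AP}

theorem sat_ev_suffix_cyc (hF : sat (cyc σ h) φ.ev) (i : ℕ) :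
    sat ((cyc σ h).suffix i) φ.ev := by
  obtain ⟨k, hk⟩ := sat_ev.1 hF
  obtain ⟨l, hl⟩ : ∃ l, σ.length = l + 1 :=
    Nat.exists_eq_add_one.2 (List.length_pos_iff.2 h)
  refine sat_ev.2 ⟨k + l * i, ?_⟩
  have hperiod : k + l * i + i = k + σ.length * i := by rw [hl]; ring
  rwa [Word.suffix_suffix, hperiod, cyc_suffix_add_length_mul]

end Cyclic

/-- G(φ₁ U φ₂) implies G(φ₁ ∨ φ₂) ∧ Fφ₂ on every word; on cyclic words the
converse implication also holds. -/
theorem G_until_c {AP : Type} (φ₁ φ₂ : LTL AP) :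
    (∀ ρ : Word AP, sat ρ (φ₁.untl φ₂).alw →
       sat ρ (LTL.conj (φ₁.disj φ₂).alw φ₂.ev)) ∧
    (∀ (σ : List (Set AP)) (h : σ ≠ []),
       sat (cyc σ h) (LTL.conj (φ₁.disj φ₂).alw φ₂.ev) →
       sat (cyc σ h) (φ₁.untl φ₂).alw) := by
  refine ⟨fun ρ hU => ?_, fun σ h ⟨hG, hF⟩ => ?_⟩
  · have hU := sat_alw.1 hU
    exact ⟨sat_alw.2 fun i => sat_disj_of_untl (hU i), sat_ev_of_untl (hU 0)⟩
  · exact sat_alw.2 fun i => sat_untl_of_alw_disj (sat_alw_suffix hG i) (sat_ev_suffix_cyc hF i)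
end

section
/- For every nonempty finite word σ over 2^AP and all LTL formulas φ₁, φ₂, φ₃: σ^ω ⊨ φ₁ U (φ₂ ∧ Fφ₃) if and only if σ^ω ⊨ (φ₁ U φ₂) ∧ Fφ₃. -/
lemma Word.suffix_suffix_s13 {AP : Type} (ρ : Word AP) (i j : ℕ) :
    (ρ.suffix i).suffix j = ρ.suffix (j + i) := by
  funext n
  simp only [Word.suffix, Nat.add_assoc]

lemma sat_ev_iff {AP : Type} (ρ : Word AP) (φ : LTL AP) :
    sat ρ φ.ev ↔ ∃ i, sat (ρ.suffix i) φ := by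
  simp only [LTL.ev, sat, implies_true, and_true]

lemma sat_ev_of_sat_ev_suffix {AP : Type} {ρ : Word AP} {φ : LTL AP} {i : ℕ}
    (hφ : sat (ρ.suffix i) φ.ev) : sat ρ φ.ev := by
  obtain ⟨k, hk⟩ := (sat_ev_iff _ _).1 hφ
  exact (sat_ev_iff _ _).2 ⟨k + i, by rwa [← Word.suffix_suffix_s13]⟩

lemma cyc_suffix_add_mul_length {AP : Type} (σ : List (Set AP)) (h : σ ≠ []) (n m : ℕ) :
    (cyc σ h).suffix (n + m * σ.length) = (cyc σ h).suffix n := by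
  funext j
  simp only [Word.suffix, cyc, ← Nat.add_assoc, Nat.add_mul_mod_self_right]

/-- A witness `k` for `F φ` at position `0` of `σ^ω` recurs at `k + i * |σ| ≥ i`. -/
lemma sat_ev_suffix_cyc_s13 {AP : Type} (σ : List (Set AP)) (h : σ ≠ []) {φ : LTL AP}
    (hφ : sat (cyc σ h) φ.ev) (i : ℕ) : sat ((cyc σ h).suffix i) φ.ev := by
  obtain ⟨k, hk⟩ := (sat_ev_iff _ _).1 hφ
  have hi : i ≤ i * σ.length := Nat.le_mul_of_pos_right i (List.length_pos_iff.mpr h)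
  refine (sat_ev_iff _ _).2 ⟨k + i * σ.length - i, ?_⟩
  rwa [Word.suffix_suffix_s13, Nat.sub_add_cancel (by omega), cyc_suffix_add_mul_length]

/-- On cyclic words: σ^ω ⊨ φ₁ U (φ₂ ∧ Fφ₃) iff σ^ω ⊨ (φ₁ U φ₂) ∧ Fφ₃. -/
theorem until_conj_F_c {AP : Type} (σ : List (Set AP)) (h : σ ≠ [])
    (φ₁ φ₂ φ₃ : LTL AP) :
    sat (cyc σ h) (φ₁.untl (φ₂.conj φ₃.ev)) ↔
      sat (cyc σ h) (LTL.conj (φ₁.untl φ₂) φ₃.ev) := by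
  constructor
  · rintro ⟨i, ⟨h₂, h₃⟩, h₁⟩
    exact ⟨⟨i, h₂, h₁⟩, sat_ev_of_sat_ev_suffix h₃⟩
  · rintro ⟨⟨i, h₂, h₁⟩, h₃⟩
    exact ⟨i, ⟨h₂, sat_ev_suffix_cyc_s13 σ h h₃ i⟩, h₁⟩
end
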